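/- arXiv:1509.02101 — 2 statements merged into one kernel-verified Lean document; each statement's English description precedes it below -/
import Mathlib

section
/- Let R be a commutative ring, k ≥ 1, and let r₀, …, r_k ∈ R be such that the image of r_k in R/(r₀,…,r_{k−1}) is a nonzerodivisor. Let M be an R-module. Then multiplication by r_k is injective on M/(r₀,…,r_{k−1})M if and only if the map Tor₁^R(R/(r₀,…,r_{k−1}), M) → Tor₁^R(R/(r₀,…,r_k), M) induced by the natural quotient homomorphism R/(r₀,…,r_{k−1}) → R/(r₀,…,r_k) is surjective. -/
/-!
Write `I = (r₀,…,r_{k−1})`, `c = r_k` and `J = (c) + I`. Since `c` is regular on `R/I`,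
`0 → R/I --c--> R/I → R/J → 0` is exact. Tensoring it with a projective (hence flat) resolution
of `M` gives a short exact sequence of complexes whose homology sequence contains
`Tor₁(R/I, M) → Tor₁(R/J, M) → Tor₀(R/I, M) --c--> Tor₀(R/I, M)`, and `Tor₀(R/I, M) = M/IM`.
So the map on `Tor₁` is onto iff the connecting map vanishes iff `c` is injective on `M/IM`.
-/

open CategoryTheory CategoryTheory.MonoidalCategory

universe u

namespace CategoryTheory

theorem epi_iff_of_eq_iso_comp_comp_inv {C : Type*} [Category C] {X Y X' Y' : C} {f : X ⟶ Y}
    {g : X' ⟶ Y'} (e : X ≅ X') (e' : Y ≅ Y') (h : f = e.hom ≫ g ≫ e'.inv) : Epi f ↔ Epi g := by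
  subst h
  simp

theorem mono_iff_of_eq_iso_comp_comp_inv {C : Type*} [Category C] {X Y X' Y' : C} {f : X ⟶ Y}
    {g : X' ⟶ Y'} (e : X ≅ X') (e' : Y ≅ Y') (h : f = e.hom ≫ g ≫ e'.inv) : Mono f ↔ Mono g := by
  subst h
  simp

theorem ShortComplex.ShortExact.epi_homologyMap_g_iff_mono_homologyMap_f
    {C : Type*} [Category C] [Abelian C] {ι : Type*} {c : ComplexShape ι}
    {S : ShortComplex (HomologicalComplex C c)} (hS : S.ShortExact) {i j : ι} (hij : c.Rel i j) :
    Epi (HomologicalComplex.homologyMap S.g i) ↔ Mono (HomologicalComplex.homologyMap S.f j) :=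
  (hS.homology_exact₃ i j hij).epi_f_iff.trans (hS.homology_exact₁ i j hij).mono_g_iff.symm

end CategoryTheory

theorem HomologicalComplex.homologyMap_smul {R : Type*} [Semiring R] {C : Type*} [Category C]
    [Preadditive C] [Linear R C] [CategoryWithHomology C] {ι : Type*} {c : ComplexShape ι}
    {K L : HomologicalComplex C c} (r : R) (φ : K ⟶ L) (i : ι) :
    homologyMap (r • φ) i = r • homologyMap φ i :=
  ShortComplex.homologyMap_smul ((shortComplexFunctor C c i).map φ) r

namespace ModuleCat

variable {R : Type u} [CommRing R]

theorem mono_smul_id_iff (X : ModuleCat.{u} R) (c : R) : Mono (c • 𝟙 X) ↔ IsSMulRegular X c :=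
  mono_iff_injective _

noncomputable def tensorChainComplex (S : ShortComplex (ModuleCat.{u} R))
    (K : ChainComplex (ModuleCat.{u} R) ℕ) : ShortComplex (ChainComplex (ModuleCat.{u} R) ℕ) :=
  ShortComplex.mk ((NatTrans.mapHomologicalComplex ((tensoringLeft _).map S.f) _).app K)
    ((NatTrans.mapHomologicalComplex ((tensoringLeft _).map S.g) _).app K) (by
      ext n : 1
      change S.f ▷ K.X n ≫ S.g ▷ K.X n = 0
      rw [← comp_whiskerRight, S.zero, MonoidalPreadditive.zero_whiskerRight])

end ModuleCat

namespace CategoryTheory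

variable {R : Type u} [CommRing R]

theorem ShortComplex.ShortExact.tensorChainComplex {S : ShortComplex (ModuleCat.{u} R)}
    (hS : S.ShortExact) (K : ChainComplex (ModuleCat.{u} R) ℕ) [∀ n, Module.Flat R (K.X n)] :
    (ModuleCat.tensorChainComplex S K).ShortExact :=
  HomologicalComplex.shortExact_of_degreewise_shortExact _ fun n =>
    hS.map_of_exact (tensorRight (K.X n))

instance ProjectiveResolution.flat_complex_X {M : ModuleCat.{u} R} (P : ProjectiveResolution M)
    (n : ℕ) : Module.Flat R (P.complex.X n) :=
  have : Module.Projective R (P.complex.X n) :=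
    (IsProjective.iff_projective _).mpr (P.projective n)
  Module.Flat.of_projective

theorem ShortComplex.ShortExact.epi_Tor_one_map_g_app_iff_mono_Tor_zero_map_f_app
    {S : ShortComplex (ModuleCat.{u} R)} (hS : S.ShortExact) (M : ModuleCat.{u} R) :
    Epi (((Tor (ModuleCat.{u} R) 1).map S.g).app M) ↔
      Mono (((Tor (ModuleCat.{u} R) 0).map S.f).app M) := by
  let P := projectiveResolution M
  calc Epi (((Tor (ModuleCat.{u} R) 1).map S.g).app M)
      ↔ Epi (HomologicalComplex.homologyMap (ModuleCat.tensorChainComplex S P.complex).g 1) :=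
        epi_iff_of_eq_iso_comp_comp_inv _ _ (ProjectiveResolution.leftDerived_app_eq _ P 1)
    _ ↔ Mono (HomologicalComplex.homologyMap (ModuleCat.tensorChainComplex S P.complex).f 0) :=
        (hS.tensorChainComplex P.complex).epi_homologyMap_g_iff_mono_homologyMap_f
          (ComplexShape.down_mk 1 0 rfl)
    _ ↔ Mono (((Tor (ModuleCat.{u} R) 0).map S.f).app M) :=
        (mono_iff_of_eq_iso_comp_comp_inv _ _ (ProjectiveResolution.leftDerived_app_eq _ P 0)).symm

theorem Tor_map_smul_id_app (A M : ModuleCat.{u} R) (c : R) (n : ℕ) :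
    ((Tor (ModuleCat.{u} R) n).map (c • 𝟙 A)).app M = c • 𝟙 _ := by
  let P := projectiveResolution M
  have h : (NatTrans.mapHomologicalComplex ((tensoringLeft _).map (c • 𝟙 A)) _).app P.complex =
      c • 𝟙 _ := by
    ext n : 1
    simp only [NatTrans.mapHomologicalComplex_app_f, curriedTensor_map_app,
      MonoidalLinear.smul_whiskerRight, id_whiskerRight, HomologicalComplex.smul_f_apply,
      HomologicalComplex.id_f]
    rfl
  have conj : ∀ {X Y : ModuleCat.{u} R} (e : X ≅ Y), e.hom ≫ (c • 𝟙 Y) ≫ e.inv = c • 𝟙 X := by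
    intros
    simp
  rw [Tor_map, ProjectiveResolution.leftDerived_app_eq _ P, h]
  simp only [HomologicalComplex.homologyFunctor_map, HomologicalComplex.homologyMap_smul,
    HomologicalComplex.homologyMap_id]
  exact conj _

noncomputable def torZeroIso (A M : ModuleCat.{u} R) :
    ((Tor (ModuleCat.{u} R) 0).obj A).obj M ≅ A ⊗ M :=
  ((tensoringLeft _).obj A).leftDerivedZeroIsoSelf.app M

end CategoryTheory

namespace Ideal

variable {R : Type u} [CommRing R]

noncomputable def smulQuotientShortComplex (I J : Ideal R) (c : R) (hJ : J = span {c} ⊔ I) :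
    ShortComplex (ModuleCat.{u} R) :=
  ShortComplex.mk (c • 𝟙 (ModuleCat.of R (R ⧸ I)))
    (ModuleCat.ofHom (Submodule.mapQ I J LinearMap.id (hJ ▸ le_sup_right))) (by
      refine ModuleCat.hom_ext (LinearMap.ext fun x => ?_)
      obtain ⟨a, rfl⟩ := Quotient.mk_surjective x
      exact Quotient.eq_zero_iff_mem.mpr
        (hJ ▸ mul_mem_right a _ (mem_sup_left (mem_span_singleton_self c))))

theorem shortExact_smulQuotientShortComplex {I J : Ideal R} {c : R} (hJ : J = span {c} ⊔ I)
    (hc : IsSMulRegular (R ⧸ I) c) : (smulQuotientShortComplex I J c hJ).ShortExact where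
  exact := by
    rw [ShortComplex.ShortExact.moduleCat_exact_iff_function_exact]
    intro x
    obtain ⟨a, rfl⟩ := Quotient.mk_surjective x
    change Quotient.mk J a = 0 ↔ ∃ y, c • y = Quotient.mk I a
    rw [Quotient.eq_zero_iff_mem, hJ, mem_span_singleton_sup]
    constructor
    · rintro ⟨b, i, hi, rfl⟩
      refine ⟨Quotient.mk I b, ?_⟩
      rw [map_add, Quotient.eq_zero_iff_mem.mpr hi, add_zero, Algebra.smul_def, mul_comm]
      rfl
    · rintro ⟨y, hy⟩
      obtain ⟨b, rfl⟩ := Quotient.mk_surjective y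
      rw [Algebra.smul_def, Quotient.algebraMap_eq, ← map_mul, Quotient.mk_eq_mk_iff_sub_mem] at hy
      exact ⟨b, a - c * b, by simpa using I.neg_mem hy, by ring⟩
  mono_f := (ModuleCat.mono_smul_id_iff _ c).mpr hc
  epi_g := (ModuleCat.epi_iff_surjective _).mpr (Quotient.factor_surjective (hJ ▸ le_sup_right))

theorem isSMulRegular_quotient_smul_top_iff_surjective_Tor_one_map {I J : Ideal R} {c : R}
    (hJ : J = span {c} ⊔ I) (hc : IsSMulRegular (R ⧸ I) c)
    (M : Type u) [AddCommGroup M] [Module R M] :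
    IsSMulRegular (M ⧸ (I • ⊤ : Submodule R M)) c ↔
      Function.Surjective (((Tor (ModuleCat.{u} R) 1).map
        (smulQuotientShortComplex I J c hJ).g).app (ModuleCat.of R M)) :=
  calc IsSMulRegular (M ⧸ (I • ⊤ : Submodule R M)) c
      ↔ IsSMulRegular (TensorProduct R (R ⧸ I) M) c :=
        ((TensorProduct.quotTensorEquivQuotSMul M I).isSMulRegular_congr c).symm
    _ ↔ IsSMulRegular (((Tor _ 0).obj (ModuleCat.of R (R ⧸ I))).obj (ModuleCat.of R M)) c :=
        ((torZeroIso (ModuleCat.of R (R ⧸ I)) (ModuleCat.of R M)).toLinearEquiv.isSMulRegular_congr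
          c).symm
    _ ↔ Mono (c • 𝟙 (((Tor _ 0).obj (ModuleCat.of R (R ⧸ I))).obj (ModuleCat.of R M))) :=
        (ModuleCat.mono_smul_id_iff _ c).symm
    _ ↔ Mono (((Tor _ 0).map (smulQuotientShortComplex I J c hJ).f).app (ModuleCat.of R M)) :=
        Iff.of_eq (congrArg Mono (Tor_map_smul_id_app _ _ c 0)).symm
    _ ↔ Epi (((Tor _ 1).map (smulQuotientShortComplex I J c hJ).g).app (ModuleCat.of R M)) :=
        ((shortExact_smulQuotientShortComplex hJ hc).epi_Tor_one_map_g_app_iff_mono_Tor_zero_map_f_app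
          _).symm
    _ ↔ _ := ModuleCat.epi_iff_surjective _

end Ideal

/-- Multiplication by `r_k` is injective on `M/(r₀,…,r_{k−1})M` if and only if the
map `Tor₁^R(R/(r₀,…,r_{k−1}), M) → Tor₁^R(R/(r₀,…,r_k), M)` induced by the natural
quotient homomorphism is surjective. -/
theorem mul_injective_iff_tor_map_surjective
    {R : Type u} [CommRing R] (k : ℕ) (r : ℕ → R)
    (hreg : Ideal.Quotient.mk (Ideal.span (r '' Set.Iio k)) (r k) ∈
      nonZeroDivisors (R ⧸ Ideal.span (r '' Set.Iio k)))
    (M : Type u) [AddCommGroup M] [Module R M] :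
    (Function.Injective fun m :
        M ⧸ (Ideal.span (r '' Set.Iio k) • ⊤ : Submodule R M) => r k • m)
      ↔ Function.Surjective
        (((Tor (ModuleCat.{u} R) 1).map
          (ModuleCat.ofHom
            (Submodule.mapQ (Ideal.span (r '' Set.Iio k)) (Ideal.span (r '' Set.Iio (k + 1)))
              LinearMap.id
              (by
                intro x hx
                exact Ideal.span_mono
                  (Set.image_mono (f := r) (Set.Iio_subset_Iio (Nat.le_succ k))) hx)))).app
          (ModuleCat.of R M)) := by
  have hJ : Ideal.span (r '' Set.Iio (k + 1)) =
      Ideal.span {r k} ⊔ Ideal.span (r '' Set.Iio k) := by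
    rw [Set.Iio_add_one_eq_Iic, ← Set.Iio_insert, Set.image_insert_eq, Ideal.span_insert]
  have hc : IsSMulRegular (R ⧸ Ideal.span (r '' Set.Iio k)) (r k) :=
    (isSMulRegular_algebraMap_iff (R ⧸ Ideal.span (r '' Set.Iio k))).mp
      (isRegular_iff_mem_nonZeroDivisors.mpr hreg).left
  exact Ideal.isSMulRegular_quotient_smul_top_iff_surjective_Tor_one_map hJ hc M
end

section
/- Let S be a commutative ring in which 2 is a nonzerodivisor, let ū ∈ S[[u]] be a power series with zero constant term satisfying ū ≡ −u mod (u²), and let σ : S[[u]] → S[[u]] be the S-algebra endomorphism given by substituting u ↦ ū; assume σ is an involution, i.e. σ(ū) = u. Then there exists a unique power series ξ ∈ S[[t]] such that u + ū equals the substitution of w := u·ū into ξ, i.e. u + ū = ξ(u·ū) in S[[u]]. -/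
open PowerSeries

/-- Substitution of the power series `w` (with zero constant term) into the power
series `f`: the coefficient of `u^n` in `f(w)` is `∑_{k ≤ n} f_k · (w^k)_n`,
which is the usual composition of formal power series. -/
noncomputable def PowerSeries.substInto {S : Type*} [CommRing S] (w f : PowerSeries S) :
    PowerSeries S :=
  PowerSeries.mk fun n =>
    ∑ k ∈ Finset.range (n + 1), PowerSeries.coeff k f * PowerSeries.coeff n (w ^ k)

/-!
Write `σ` for substitution of `ū` and `w = u·ū`. Since `σ` is an involution, `σ` fixes `w`,
hence every `ξ(w)`, and also `g = u + ū`. As `w = -u² + O(u³)`, the coefficients of `ξ(w)` in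
degrees `2k` form a triangular system in the coefficients of `ξ` with diagonal `(-1)^k`, so a
unique `ξ` matches `g` in all even degrees. The difference `g - ξ(w)` is then `σ`-fixed with
vanishing even coefficients; at its lowest nonzero degree `n` (odd), `σ` multiplies the
coefficient by `(-1)^n = -1`, so twice that coefficient is zero, and `2` is a nonzerodivisor.
-/

namespace PowerSeries

variable {S : Type*} [CommRing S] {w : S⟦X⟧}

theorem coeff_pow_eq_zero_of_X_pow_dvd {d k n : ℕ} (hw : X ^ d ∣ w) (h : n < d * k) :
    coeff n (w ^ k) = 0 := by
  refine X_pow_dvd_iff.mp ?_ n h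
  rw [pow_mul]
  exact pow_dvd_pow_of_dvd hw k

theorem coeff_mul_pow_of_X_pow_dvd {d : ℕ} (hw : X ^ d ∣ w) (k : ℕ) :
    coeff (d * k) (w ^ k) = coeff d w ^ k := by
  obtain ⟨v, rfl⟩ := hw
  have hpow := coeff_X_pow_mul (v ^ k) (d * k) 0
  have hlead := coeff_X_pow_mul v d 0
  simp only [zero_add, coeff_zero_eq_constantCoeff, map_pow] at hpow hlead
  rw [mul_pow, ← pow_mul, hpow, hlead]

theorem coeff_subst_eq_sum_range (hw : constantCoeff w = 0) (f : S⟦X⟧) (n : ℕ) :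
    coeff n (f.subst w) = ∑ i ∈ Finset.range (n + 1), coeff i f * coeff n (w ^ i) := by
  rw [coeff_subst' (HasSubst.of_constantCoeff_zero' hw)]
  refine finsum_eq_sum_of_support_subset _ fun i hi => ?_
  by_contra hin
  simp only [Finset.coe_range, Set.mem_Iio, not_lt] at hin
  have hX : X ^ 1 ∣ w := by rwa [pow_one, X_dvd_iff]
  exact hi (by simp only [coeff_pow_eq_zero_of_X_pow_dvd hX (by omega : n < 1 * i), smul_zero])

theorem substInto_eq_subst (hw : constantCoeff w = 0) (f : S⟦X⟧) :
    substInto w f = f.subst w := by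
  ext n
  rw [coeff_subst_eq_sum_range hw, substInto, coeff_mk]

theorem coeff_mul_subst_of_X_pow_dvd {d : ℕ} (hd : 0 < d) (hw : X ^ d ∣ w) (f : S⟦X⟧) (k : ℕ) :
    coeff (d * k) (f.subst w) =
      ∑ i ∈ Finset.range k, coeff i f * coeff (d * k) (w ^ i) + coeff k f * coeff d w ^ k := by
  have hw₀ : constantCoeff w = 0 := X_dvd_iff.mp ((dvd_pow_self X hd.ne').trans hw)
  rw [coeff_subst_eq_sum_range hw₀, ← coeff_mul_pow_of_X_pow_dvd hw, ← Finset.sum_range_succ]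
  refine (Finset.sum_subset (Finset.range_subset_range.mpr (by nlinarith)) fun i _ hi => ?_).symm
  rw [Finset.mem_range, not_lt] at hi
  rw [coeff_pow_eq_zero_of_X_pow_dvd hw (by nlinarith), mul_zero]

/-- Solves `coeff (d * k) (f.subst w) = coeff (d * k) g` for `coeff k f`, the system being
triangular by `coeff_mul_subst_of_X_pow_dvd`. -/
noncomputable def substSectionCoeff (d : ℕ) (w g : S⟦X⟧) : ℕ → S
  | k => Ring.inverse (coeff d w) ^ k *
      (coeff (d * k) g - ∑ i : Fin k, substSectionCoeff d w g i * coeff (d * k) (w ^ (i : ℕ)))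

theorem exists_coeff_mul_subst_eq {d : ℕ} (hd : 0 < d) (hw : X ^ d ∣ w) (hc : IsUnit (coeff d w))
    (g : S⟦X⟧) : ∃ f : S⟦X⟧, ∀ k, coeff (d * k) (f.subst w) = coeff (d * k) g := by
  refine ⟨mk (substSectionCoeff d w g), fun k => ?_⟩
  have hinv : Ring.inverse (coeff d w) ^ k * coeff d w ^ k = 1 := by
    rw [← mul_pow, Ring.inverse_mul_cancel _ hc, one_pow]
  rw [coeff_mul_subst_of_X_pow_dvd hd hw, coeff_mk, substSectionCoeff,
    Fin.sum_univ_eq_sum_range (fun i => substSectionCoeff d w g i * coeff (d * k) (w ^ i))]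
  simp only [coeff_mk]
  linear_combination (coeff (d * k) g -
    ∑ i ∈ Finset.range k, substSectionCoeff d w g i * coeff (d * k) (w ^ i)) * hinv

theorem subst_injective_of_X_pow_dvd {d : ℕ} (hd : 0 < d) (hw : X ^ d ∣ w)
    (hc : coeff d w ∈ nonZeroDivisors S) :
    Function.Injective fun f : S⟦X⟧ => f.subst w := by
  intro f f' h
  ext k
  induction k using Nat.strong_induction_on with
  | _ k ih =>
    have hk := congrArg (coeff (d * k)) h
    simp only [coeff_mul_subst_of_X_pow_dvd hd hw] at hk
    rw [Finset.sum_congr rfl fun i hi => by rw [ih i (Finset.mem_range.mp hi)], add_right_inj,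
      mul_cancel_right_mem_nonZeroDivisors (pow_mem hc k)] at hk
    exact hk

theorem coeff_subst_of_X_pow_dvd (hw : X ∣ w) {f : S⟦X⟧} {n : ℕ} (hf : X ^ n ∣ f) :
    coeff n (f.subst w) = coeff n f * coeff 1 w ^ n := by
  have hw' : X ^ 1 ∣ w := by rwa [pow_one]
  have := coeff_mul_subst_of_X_pow_dvd one_pos hw' f n
  rwa [one_mul, Finset.sum_eq_zero fun i hi => by
    rw [X_pow_dvd_iff.mp hf i (Finset.mem_range.mp hi), zero_mul], zero_add] at this

theorem eq_zero_of_subst_eq_self (h2 : (2 : S) ∈ nonZeroDivisors S) (hw : X ∣ w)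
    (hw₁ : coeff 1 w = -1) {f : S⟦X⟧} (hf : f.subst w = f) (heven : ∀ k, coeff (2 * k) f = 0) :
    f = 0 := by
  ext n
  induction n using Nat.strong_induction_on with
  | _ n ih =>
    obtain ⟨k, rfl | rfl⟩ := Nat.even_or_odd' n
    · exact heven k
    · have hodd := coeff_subst_of_X_pow_dvd hw (X_pow_dvd_iff.mpr ih)
      rw [hf, hw₁, Odd.neg_one_pow ⟨k, rfl⟩, mul_neg_one, eq_neg_iff_add_eq_zero, ← two_mul] at hodd
      exact (mul_left_mem_nonZeroDivisors_eq_zero_iff h2).mp hodd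

end PowerSeries

/-- There is a unique power series `ξ ∈ S[[t]]` with `ξ(u·ū) = u + ū`. -/
theorem exists_unique_xi_of_conjugation
    {S : Type*} [CommRing S] (h2 : (2 : S) ∈ nonZeroDivisors S)
    (ubar : PowerSeries S) (h0 : PowerSeries.constantCoeff ubar = 0)
    (hcong : ubar + PowerSeries.X ∈ Ideal.span {(PowerSeries.X : PowerSeries S) ^ 2})
    (hinv : PowerSeries.substInto ubar ubar = PowerSeries.X) :
    ∃! ξ : PowerSeries S,
      PowerSeries.substInto (PowerSeries.X * ubar) ξ = PowerSeries.X + ubar := by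
  have hX : X ∣ ubar := X_dvd_iff.mpr h0
  have hσ : HasSubst ubar := HasSubst.of_constantCoeff_zero' h0
  have hu₁ : coeff 1 ubar = -1 := by
    have h := X_pow_dvd_iff.mp (Ideal.mem_span_singleton.mp hcong) 1 one_lt_two
    rwa [map_add, coeff_one_X, add_eq_zero_iff_eq_neg] at h
  rw [substInto_eq_subst h0] at hinv
  set w : S⟦X⟧ := X * ubar
  have hw : X ^ 2 ∣ w := by rw [pow_two]; exact mul_dvd_mul_left X hX
  have hw₀ : constantCoeff w = 0 := by simp [w]
  have hw₂ : IsUnit (coeff 2 w) := by rw [coeff_succ_X_mul, hu₁]; exact isUnit_neg_one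
  have hfix : ∀ ξ : S⟦X⟧, subst ubar (subst w ξ) = subst w ξ := fun ξ => by
    rw [subst_comp_subst_apply (HasSubst.of_constantCoeff_zero' hw₀) hσ, subst_mul hσ,
      subst_X hσ, hinv, mul_comm]
  simp only [substInto_eq_subst hw₀]
  obtain ⟨ξ, hξ⟩ := exists_coeff_mul_subst_eq two_pos hw hw₂ (X + ubar)
  have hsol : ξ.subst w = X + ubar := by
    refine (sub_eq_zero.mp (eq_zero_of_subst_eq_self h2 hX hu₁ ?_ fun k => ?_)).symm
    · rw [subst_sub hσ, subst_add hσ, subst_X hσ, hinv, hfix, add_comm]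
    · rw [map_sub, hξ, sub_self]
  exact ⟨ξ, hsol, fun ξ' hξ' =>
    subst_injective_of_X_pow_dvd two_pos hw hw₂.mem_nonZeroDivisors (hξ'.trans hsol.symm)⟩
end
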